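/- If G is a 3-connected planar graph that is a partial 3-tree, and G' is a vertex-minimal 3-tree supergraph of G with perfect elimination ordering ending in vertex u whose neighbors in G' are a, b, c, then the last vertex u belongs to G, all of a, b, c belong to G, and the graph obtained from G by adding the edges ab, bc, ac is still planar and a partial 3-tree. -/

import Mathlib

/-!
Deleting the last vertex `u` of the elimination ordering of `G'` leaves a 3-tree, so minimality
forces `u ∈ G`. The `G`-neighbours of `u` lie among its `G'`-neighbours `a, b, c`, and
3-connectivity makes them all neighbours; `a, b, c` is a clique of `G'`, so `G + abc ≤ G'`.

Planarity is the absence of `K₅` and `K₃,₃` minors. Given a model of `K` in `G + abc`: if `u`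
alone is a branch set, it has at most three neighbours in `K`, which rules out `K₅`, and for
`K₃,₃` those neighbours lie on one side, so no triangle edge is used. Otherwise `u` is moved into a
suitable branch set, where it replaces each triangle edge by a path through `u`. This fails only if
the triangle edges join three branch sets that form a triangle of `K`; for `K₅` these three sets,
the other two and `{u}` form a `K₃,₃` model in `G`, and `K₃,₃` has no triangle.
-/

open SimpleGraph

/-- A finite-style graph: a subgraph of the complete graph on `ℕ`,
i.e. a graph together with its vertex set `verts ⊆ ℕ`. -/
abbrev FGraph := SimpleGraph.Subgraph (⊤ : SimpleGraph ℕ)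

/-- The complete graph on the vertex set `s`. -/
def cliqueGraph (s : Finset ℕ) : FGraph where
  verts := ↑s
  Adj u v := u ∈ s ∧ v ∈ s ∧ u ≠ v
  adj_sub h := h.2.2
  edge_vert h := h.1
  symm := ⟨fun u v h => ⟨h.2.1, h.1, h.2.2.symm⟩⟩

/-- Add a new vertex `v` to `G`, joined to the vertices of `s` (which are in `G`). -/
def addVertex (G : FGraph) (v : ℕ) (s : Finset ℕ) : FGraph where
  verts := insert v G.verts
  Adj x y := G.Adj x y ∨ (x = v ∧ y ≠ v ∧ y ∈ s ∧ y ∈ G.verts)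
    ∨ (y = v ∧ x ≠ v ∧ x ∈ s ∧ x ∈ G.verts)
  adj_sub h := by
    rcases h with h | h | h
    · exact G.adj_sub h
    · exact fun e => h.2.1 (by rw [← e, h.1])
    · exact fun e => h.2.1 (by rw [e, h.1])
  edge_vert h := by
    rcases h with h | h | h
    · exact Set.mem_insert_of_mem _ (G.edge_vert h)
    · exact h.1 ▸ Set.mem_insert _ _
    · exact Set.mem_insert_of_mem _ h.2.2.2
  symm := ⟨fun x y h => by
    rcases h with h | h | h
    · exact Or.inl (G.adj_symm h)
    · exact Or.inr (Or.inr h)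
    · exact Or.inr (Or.inl h)⟩

/-- `s` is a clique (of pairwise adjacent vertices) in `G`. -/
def IsCliqueIn (G : FGraph) (s : Finset ℕ) : Prop :=
  ↑s ⊆ G.verts ∧ ∀ u ∈ s, ∀ v ∈ s, u ≠ v → G.Adj u v

/-- `k`-trees: start from a `k`-clique and repeatedly add a vertex joined to an
existing `k`-clique. -/
inductive IsKTree (k : ℕ) : FGraph → Prop
  | base (s : Finset ℕ) (hs : s.card = k) : IsKTree k (cliqueGraph s)
  | grow (G : FGraph) (hG : IsKTree k G) (s : Finset ℕ) (hs : s.card = k)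
      (hclique : IsCliqueIn G s) (v : ℕ) (hv : v ∉ G.verts) :
      IsKTree k (addVertex G v s)

/-- A partial `k`-tree is a subgraph of a `k`-tree. -/
def IsPartialKTree (k : ℕ) (G : FGraph) : Prop := ∃ H : FGraph, IsKTree k H ∧ G ≤ H

/-- Add the single edge `uv` (and its endpoints) to `G`. -/
def addEdge (G : FGraph) (u v : ℕ) : FGraph where
  verts := insert u (insert v G.verts)
  Adj x y := G.Adj x y ∨ (x = u ∧ y = v ∧ u ≠ v) ∨ (x = v ∧ y = u ∧ u ≠ v)
  adj_sub h := by
    rcases h with h | h | h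
    · exact G.adj_sub h
    · exact fun e => h.2.2 (by rw [← h.1, ← h.2.1, e])
    · exact fun e => h.2.2 (by rw [← h.1, ← h.2.1, e])
  edge_vert h := by
    rcases h with h | h | h
    · exact Set.mem_insert_of_mem _ (Set.mem_insert_of_mem _ (G.edge_vert h))
    · exact h.1 ▸ Set.mem_insert _ _
    · exact h.1 ▸ Set.mem_insert_of_mem _ (Set.mem_insert _ _)
  symm := ⟨fun x y h => by
    rcases h with h | h | h
    · exact Or.inl (G.adj_symm h)
    · exact Or.inr (Or.inr ⟨h.2.1, h.1, h.2.2⟩)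
    · exact Or.inr (Or.inl ⟨h.2.1, h.1, h.2.2⟩)⟩

/-- `G` is a minor of `H`: there are pairwise disjoint nonempty connected branch sets
in `H`, one for each vertex of `G`, with an `H`-edge between the branch sets of any
two `G`-adjacent vertices. -/
def IsMinor (G H : FGraph) : Prop :=
  ∃ β : ℕ → Finset ℕ,
    (∀ u ∈ G.verts, (β u).Nonempty ∧ ↑(β u) ⊆ H.verts ∧ (H.induce ↑(β u)).coe.Connected) ∧
    (∀ u ∈ G.verts, ∀ v ∈ G.verts, u ≠ v → Disjoint (β u) (β v)) ∧
    (∀ u v, G.Adj u v → ∃ x ∈ β u, ∃ y ∈ β v, H.Adj x y)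

/-- The complete graph `K₅`. -/
def K5g : FGraph := cliqueGraph {0, 1, 2, 3, 4}

/-- The complete bipartite graph `K₃,₃` with parts `{0,1,2}` and `{3,4,5}`. -/
def K33g : FGraph where
  verts := {n : ℕ | n < 6}
  Adj u v := (u < 3 ∧ 3 ≤ v ∧ v < 6) ∨ (v < 3 ∧ 3 ≤ u ∧ u < 6)
  adj_sub := fun {u v} h => by rcases h with h | h <;> exact show u ≠ v by omega
  edge_vert := fun {u v} h => by rcases h with h | h <;> exact show u < 6 by omega
  symm := ⟨fun u v h => by tauto⟩

/-- Planarity via Wagner's theorem: no `K₅` and no `K₃,₃` minor. -/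
def Planar (G : FGraph) : Prop := ¬ IsMinor K5g G ∧ ¬ IsMinor K33g G

/-- In a maximal planar graph (planar triangulation), the triangle `abc` bounds a face:
combinatorially, a new vertex can be placed inside it and joined to `a`, `b`, `c`
while preserving planarity. -/
def IsFaceTriangle (G : FGraph) (a b c : ℕ) : Prop :=
  G.Adj a b ∧ G.Adj b c ∧ G.Adj a c ∧
  ∀ v, v ∉ G.verts → Planar (addVertex G v {a, b, c})

/-- A perfect elimination scheme witnessing that `H` is a `k`-tree: a listing of the
vertices of `H` whose first `k` entries form a clique and each later entry has exactly
`k` earlier neighbours, which form a clique. -/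
def IsPESk (k : ℕ) (l : List ℕ) (H : FGraph) : Prop :=
  l.Nodup ∧ H.verts = {v | v ∈ l} ∧ k ≤ l.length ∧
  (∀ i j : Fin l.length, (i : ℕ) < k → (j : ℕ) < k → i ≠ j → H.Adj (l.get i) (l.get j)) ∧
  (∀ i : Fin l.length, k ≤ (i : ℕ) →
    ∃ s : Finset (Fin l.length), s.card = k ∧ (∀ j ∈ s, (j : ℕ) < (i : ℕ)) ∧
      (∀ a ∈ s, ∀ b ∈ s, a ≠ b → H.Adj (l.get a) (l.get b)) ∧
      (∀ j : Fin l.length, (j : ℕ) < (i : ℕ) → (H.Adj (l.get j) (l.get i) ↔ j ∈ s)))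

/-- A vertex is simplicial if its neighbourhood induces a clique. -/
def IsSimplicial (G : FGraph) (v : ℕ) : Prop :=
  v ∈ G.verts ∧ ∀ u w, G.Adj v u → G.Adj v w → u ≠ w → G.Adj u w

/-- A graph is chordal if it has no induced cycle of length greater than 3. -/
def IsChordal (G : FGraph) : Prop :=
  ∀ n : ℕ, 4 ≤ n → ¬ ∃ f : Fin n → ℕ, Function.Injective f ∧ (∀ i, f i ∈ G.verts) ∧
    ∀ i j : Fin n, G.Adj (f i) (f j) ↔ ((i : ℕ) + 1) % n = (j : ℕ) ∨ ((j : ℕ) + 1) % n = (i : ℕ)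

/-- A (general) perfect elimination scheme: an ordering of the vertices such that each
vertex is simplicial in the subgraph induced by it and the earlier vertices. -/
def IsPES (l : List ℕ) (G : FGraph) : Prop :=
  l.Nodup ∧ G.verts = {v | v ∈ l} ∧
  ∀ i : Fin l.length, IsSimplicial (G.induce {v | v ∈ l.take ((i : ℕ) + 1)}) (l.get i)

/-- `G` can be reduced to the empty graph by repeatedly deleting simplicial vertices. -/
inductive Reducible : FGraph → Prop
  | empty (G : FGraph) (h : G.verts = ∅) : Reducible G
  | delete (G : FGraph) (v : ℕ) (hv : IsSimplicial G v)
      (h : Reducible (G.deleteVerts {v})) : Reducible G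

/-- `G` is 3-connected: at least 4 vertices, and deleting any two vertices leaves it
connected. -/
def ThreeConnected (G : FGraph) : Prop :=
  4 ≤ G.verts.ncard ∧ ∀ S : Finset ℕ, S.card ≤ 2 → (G.deleteVerts ↑S).Connected

/-- `G` has a tree decomposition of width at most `k`. -/
def HasTreewidthLE (G : FGraph) (k : ℕ) : Prop :=
  ∃ (ι : Type) (T : SimpleGraph ι) (B : ι → Finset ℕ),
    T.Connected ∧ T.IsAcyclic ∧
    (∀ v ∈ G.verts, ∃ i, v ∈ B i) ∧
    (∀ u v, G.Adj u v → ∃ i, u ∈ B i ∧ v ∈ B i) ∧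
    (∀ v ∈ G.verts, (SimpleGraph.induce {i | v ∈ B i} T).Connected) ∧
    (∀ i, (B i).card ≤ k + 1)

/-- `G` is acyclic (a forest). -/
def AcyclicFG (G : FGraph) : Prop := G.coe.IsAcyclic

/-- `G` is a complete graph on its vertex set. -/
def CompleteFG (G : FGraph) : Prop := ∀ u ∈ G.verts, ∀ v ∈ G.verts, u ≠ v → G.Adj u v

/-- The path on the three vertices `0, 1, 2`. -/
def P3 : FGraph := addEdge (addEdge (cliqueGraph ∅) 0 1) 1 2

theorem SimpleGraph.Reachable.lift {V V' : Type*} {G : SimpleGraph V} {G' : SimpleGraph V'}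
    (f : V → V') (hf : ∀ a b, G.Adj a b → G'.Reachable (f a) (f b)) {a b : V}
    (h : G.Reachable a b) : G'.Reachable (f a) (f b) := by
  rw [SimpleGraph.reachable_iff_reflTransGen] at h ⊢
  exact Relation.ReflTransGen.lift' f
    (fun a b hab => (SimpleGraph.reachable_iff_reflTransGen _ _).1 (hf a b hab)) a b h

theorem SimpleGraph.Connected.of_reachable_map {V V' : Type*} {G : SimpleGraph V}
    {G' : SimpleGraph V'} (hG : G.Connected) (f : V → V')
    (hf : ∀ a b, G.Adj a b → G'.Reachable (f a) (f b)) (hsurj : ∀ v, ∃ a, G'.Reachable v (f a)) :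
    G'.Connected := by
  obtain ⟨a₀⟩ := hG.nonempty
  refine (connected_iff_exists_forall_reachable G').2 ⟨f a₀, fun v => ?_⟩
  obtain ⟨a, ha⟩ := hsurj v
  exact ((hG.preconnected a₀ a).lift f hf).trans ha.symm

section InducedConnectivity

variable {A B : FGraph} {S : Set ℕ} {u w : ℕ}

theorem exists_adj_of_coe_connected (hA : A.coe.Connected) {v v' : ℕ} (hv : v ∈ A.verts)
    (hv' : v' ∈ A.verts) (hne : v ≠ v') : ∃ r, A.Adj v r := by
  obtain ⟨r, hr⟩ := (hA.preconnected ⟨v, hv⟩ ⟨v', hv'⟩).nonempty_neighborSet_left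
    (fun h => hne (congrArg Subtype.val h))
  exact ⟨r, hr⟩

theorem eq_singleton_of_induce_connected {S : Finset ℕ} (hS : (A.induce ↑S).coe.Connected)
    (hu : u ∈ S) (hnadj : ∀ r ∈ S, ¬ A.Adj u r) : S = {u} := by
  refine Finset.eq_singleton_iff_unique_mem.2 ⟨hu, fun r hr => ?_⟩
  by_contra hne
  obtain ⟨r', hr'⟩ := exists_adj_of_coe_connected hS (Finset.mem_coe.2 hu)
    (Finset.mem_coe.2 hr) (Ne.symm hne)
  exact hnadj r' hr'.2.1 hr'.2.2

theorem induce_connected_mono (hS : (A.induce S).coe.Connected)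
    (hadj : ∀ p ∈ S, ∀ q ∈ S, A.Adj p q → B.Adj p q) : (B.induce S).coe.Connected :=
  (SimpleGraph.Subgraph.Connected.mono' (H := A.induce S) (H' := B.induce S)
    (fun _ _ h => ⟨h.1, h.2.1, hadj _ h.1 _ h.2.1 h.2.2⟩) rfl ⟨hS⟩).coe

theorem induce_insert_connected (hS : (A.induce S).coe.Connected) (hw : w ∈ S)
    (huw : B.Adj u w) (hadj : ∀ p ∈ S, ∀ q ∈ S, A.Adj p q → B.Adj p q ∨ B.Adj p u ∧ B.Adj u q) :
    (B.induce (insert u S)).coe.Connected := by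
  have hB : ∀ p q (hp : p ∈ insert u S) (hq : q ∈ insert u S), B.Adj p q →
      (B.induce (insert u S)).coe.Reachable ⟨p, hp⟩ ⟨q, hq⟩ :=
    fun _ _ hp hq h => SimpleGraph.Adj.reachable (show (B.induce _).Adj _ _ from ⟨hp, hq, h⟩)
  refine hS.of_reachable_map (Set.inclusion (Set.subset_insert u S)) (fun p q hpq => ?_)
    (fun v => ?_)
  · rcases hadj p p.2 q q.2 hpq.2.2 with h | ⟨h₁, h₂⟩
    · exact hB _ _ _ _ h
    · exact (hB _ u _ (Set.mem_insert u S) h₁).trans (hB u _ _ _ h₂)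
  · obtain ⟨v, rfl | hv⟩ := v
    · exact ⟨⟨w, hw⟩, hB _ _ _ _ huw⟩
    · exact ⟨⟨v, hv⟩, .rfl⟩

theorem induce_diff_singleton_connected (hS : (A.induce S).coe.Connected) (hw : w ∈ S)
    (hwu : w ≠ u) (hleaf : ∀ r ∈ S, A.Adj u r → r = w) :
    (A.induce (S \ {u})).coe.Connected := by
  classical
  let f : (A.induce S).verts → (A.induce (S \ {u})).verts := fun p =>
    if h : (p : ℕ) = u then ⟨w, hw, hwu⟩ else ⟨p, p.2, h⟩
  have hf : ∀ p, ((f p : (A.induce (S \ {u})).verts) : ℕ) = if (p : ℕ) = u then w else p := by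
    intro p
    by_cases h : (p : ℕ) = u <;> simp [f, h]
  refine hS.of_reachable_map f (fun p q hpq => ?_) (fun v => ⟨⟨v, v.2.1⟩, ?_⟩)
  · have hpq' : A.Adj p q := hpq.2.2
    by_cases hp : (p : ℕ) = u
    · have hq : (q : ℕ) = w := hleaf q q.2 (hp ▸ hpq')
      have : f p = f q := Subtype.ext (by rw [hf, hf, if_pos hp, if_neg (hq ▸ hwu), hq])
      exact this ▸ .rfl
    by_cases hq : (q : ℕ) = u
    · have hp' : (p : ℕ) = w := hleaf p p.2 (hq ▸ hpq'.symm)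
      have : f p = f q := Subtype.ext (by rw [hf, hf, if_pos hq, if_neg hp, hp'])
      exact this ▸ .rfl
    refine SimpleGraph.Adj.reachable (show (A.induce _).Adj _ _ from ⟨(f p).2, (f q).2, ?_⟩)
    rwa [hf, hf, if_neg hp, if_neg hq]
  · have : f ⟨v, v.2.1⟩ = v := Subtype.ext (by rw [hf]; exact if_neg v.2.2)
    rw [this]

theorem induce_singleton_connected (A : FGraph) (x : ℕ) : (A.induce {x}).coe.Connected := by
  have : Subsingleton (A.induce {x}).verts := Set.subsingleton_singleton.coe_sort
  exact SimpleGraph.connected_iff _ |>.2 ⟨.of_subsingleton, ⟨⟨x, rfl⟩⟩⟩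

end InducedConnectivity

theorem IsKTree.finite_verts {k : ℕ} {H : FGraph} (h : IsKTree k H) : H.verts.Finite := by
  induction h with
  | base s _ => exact s.finite_toSet
  | grow _ _ _ _ _ v _ ih => exact ih.insert v

section AddVertex

variable {G H : FGraph} {v : ℕ} {s : Finset ℕ}

theorem le_addVertex : H ≤ addVertex H v s :=
  ⟨Set.subset_insert v H.verts, fun _ _ h => Or.inl h⟩

theorem IsCliqueIn.isSimplicial_addVertex (hs : IsCliqueIn H s) (hv : v ∉ H.verts) :
    IsSimplicial (addVertex H v s) v := by
  have hnbr : ∀ a, (addVertex H v s).Adj v a → a ∈ s := by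
    rintro a (h | ⟨-, -, ha, -⟩ | ⟨rfl, h, -⟩)
    exacts [absurd (H.edge_vert h) hv, ha, absurd rfl h]
  exact ⟨Set.mem_insert v H.verts, fun a b ha hb hab =>
    le_addVertex.2 (hs.2 a (hnbr a ha) b (hnbr b hb) hab)⟩

theorem le_of_le_addVertex (h : G ≤ addVertex H v s) (hv : v ∉ G.verts) : G ≤ H := by
  refine ⟨fun x hx => (h.1 hx).resolve_left (fun e => hv (e ▸ hx)), fun x y hxy => ?_⟩
  rcases h.2 hxy with h' | ⟨rfl, -⟩ | ⟨rfl, -⟩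
  exacts [h', absurd (G.edge_vert hxy) hv, absurd (G.edge_vert hxy.symm) hv]

theorem mem_verts_of_le_addVertex_of_minimal {k : ℕ} (hH : IsKTree k H) (hv : v ∉ H.verts)
    (hG : G ≤ addVertex H v s)
    (hmin : ∀ H' : FGraph, IsKTree k H' → G ≤ H' → (addVertex H v s).verts.ncard ≤ H'.verts.ncard) :
    v ∈ G.verts := by
  by_contra hvG
  have := hmin H hH (le_of_le_addVertex hG hvG)
  rw [show (addVertex H v s).verts = insert v H.verts from rfl,
    Set.ncard_insert_of_notMem hv hH.finite_verts] at this
  omega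

end AddVertex

theorem List.Nodup.getElem_notMem_take {α : Type*} {l : List α} (hl : l.Nodup) {n : ℕ}
    (hn : n < l.length) :
    l[n] ∉ l.take n := by
  rw [List.mem_take_iff_getElem]
  rintro ⟨j, hj, he⟩
  have := (hl.getElem_inj_iff).1 he
  omega

namespace IsPESk

variable {k : ℕ} {l : List ℕ} {H : FGraph}

theorem ncard_verts (h : IsPESk k l H) : H.verts.ncard = l.length := by
  rw [h.2.1, show {v | v ∈ l} = (l.toFinset : Set ℕ) by ext; simp, Set.ncard_coe_finset,
    List.toFinset_card_of_nodup h.1]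

theorem induce_take_eq_cliqueGraph (h : IsPESk k l H) :
    H.induce {x | x ∈ l.take k} = cliqueGraph (l.take k).toFinset := by
  obtain ⟨-, -, hk, hclique, -⟩ := h
  refine SimpleGraph.Subgraph.ext (by ext; simp [cliqueGraph]) ?_
  funext x y
  refine propext ⟨fun hxy => ⟨by simpa using hxy.1, by simpa using hxy.2.1, hxy.2.2.ne⟩,
    fun ⟨hx, hy, hxy⟩ => ⟨by simpa using hx, by simpa using hy, ?_⟩⟩
  obtain ⟨i, hi, rfl⟩ := List.mem_take_iff_getElem.1 (List.mem_toFinset.1 hx)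
  obtain ⟨j, hj, rfl⟩ := List.mem_take_iff_getElem.1 (List.mem_toFinset.1 hy)
  exact hclique ⟨i, by omega⟩ ⟨j, by omega⟩ (by simp; omega) (by simp; omega)
    (fun e => hxy (by simp only [Fin.mk.injEq] at e; subst e; rfl))

theorem induce_take_succ_eq_addVertex (h : IsPESk k l H) {n : ℕ} (hkn : k ≤ n)
    (hn : n < l.length) :
    ∃ s : Finset ℕ, s.card = k ∧ IsCliqueIn (H.induce {x | x ∈ l.take n}) s ∧
      H.induce {x | x ∈ l.take (n + 1)} = addVertex (H.induce {x | x ∈ l.take n}) l[n] s := by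
  obtain ⟨hnd, -, -, -, hstep⟩ := h
  obtain ⟨s, hcard, hlt, hclique, hiff⟩ := hstep ⟨n, hn⟩ hkn
  have hmem : ∀ j ∈ s, l.get j ∈ l.take n := fun j hj =>
    List.mem_take_iff_getElem.2 ⟨j, by have := hlt j hj; simp at this ⊢; omega, rfl⟩
  have hadj : ∀ y ∈ l.take n, H.Adj l[n] y ↔ y ∈ s.image l.get := by
    intro y hy
    obtain ⟨j, hj, rfl⟩ := List.mem_take_iff_getElem.1 hy
    rw [Finset.mem_image, H.adj_comm]
    refine (hiff ⟨j, by omega⟩ (by simp; omega)).trans ⟨fun hj' => ⟨_, hj', rfl⟩, ?_⟩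
    rintro ⟨j', hj', he⟩
    rwa [← hnd.injective_get (he.trans rfl)]
  refine ⟨s.image l.get, (Finset.card_image_of_injective s hnd.injective_get).trans hcard,
    ⟨?_, ?_⟩, ?_⟩
  · intro y hy
    obtain ⟨j, hj, rfl⟩ := Finset.mem_image.1 (Finset.mem_coe.1 hy)
    exact hmem j hj
  · simp only [Finset.mem_image]
    rintro _ ⟨i, hi, rfl⟩ _ ⟨j, hj, rfl⟩ hij
    exact ⟨hmem i hi, hmem j hj, hclique i hi j hj (fun e => hij (e ▸ rfl))⟩
  · have htake : ∀ x, x ∈ l.take (n + 1) ↔ x = l[n] ∨ x ∈ l.take n := by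
      intro x
      rw [List.take_add_one, List.getElem?_eq_getElem hn]
      simp only [List.mem_append, Option.toList_some, List.mem_singleton]
      exact or_comm
    refine SimpleGraph.Subgraph.ext (by ext x; exact htake x) ?_
    funext x y
    apply propext
    simp only [SimpleGraph.Subgraph.induce_adj, addVertex, Set.mem_ofPred_eq, htake]
    constructor
    · rintro ⟨rfl | hx, rfl | hy, hxy⟩
      · exact absurd rfl hxy.ne
      · exact Or.inr (Or.inl ⟨rfl, hxy.ne.symm, (hadj y hy).1 hxy, hy⟩)
      · exact Or.inr (Or.inr ⟨rfl, hxy.ne, (hadj x hx).1 hxy.symm, hx⟩)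
      · exact Or.inl ⟨hx, hy, hxy⟩
    · rintro (⟨hx, hy, hxy⟩ | ⟨rfl, -, hs, hy⟩ | ⟨rfl, -, hs, hx⟩)
      · exact ⟨Or.inr hx, Or.inr hy, hxy⟩
      · exact ⟨Or.inl rfl, Or.inr hy, (hadj y hy).2 hs⟩
      · exact ⟨Or.inr hx, Or.inl rfl, ((hadj x hx).2 hs).symm⟩

theorem isKTree_induce_take (h : IsPESk k l H) {n : ℕ} (hkn : k ≤ n) (hn : n ≤ l.length) :
    IsKTree k (H.induce {x | x ∈ l.take n}) := by
  induction n, hkn using Nat.le_induction with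
  | base =>
    rw [h.induce_take_eq_cliqueGraph]
    exact IsKTree.base _ (by rw [List.toFinset_card_of_nodup (h.1.sublist (List.take_sublist _ _)),
      List.length_take, min_eq_left hn])
  | succ n hkn ih =>
    obtain ⟨s, hcard, hs, heq⟩ := h.induce_take_succ_eq_addVertex hkn (by omega)
    rw [heq]
    exact IsKTree.grow _ (ih (by omega)) s hcard hs _ (h.1.getElem_notMem_take (by omega))

theorem exists_isKTree_eq_addVertex (h : IsPESk k l H) (hk : k < l.length) {u : ℕ}
    (hu : l.getLast? = some u) :
    ∃ H₀ s, IsKTree k H₀ ∧ IsCliqueIn H₀ s ∧ u ∉ H₀.verts ∧ H = addVertex H₀ u s := by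
  have hn : l.length - 1 < l.length := by omega
  have hu' : l[l.length - 1] = u := by
    rw [List.getLast?_eq_getElem?, List.getElem?_eq_getElem hn] at hu
    exact Option.some_inj.1 hu
  obtain ⟨s, -, hs, heq⟩ := h.induce_take_succ_eq_addVertex (n := l.length - 1) (by omega) hn
  refine ⟨_, s, h.isKTree_induce_take (by omega) (by omega), hs,
    hu' ▸ h.1.getElem_notMem_take hn, ?_⟩
  rw [← hu', ← heq, Nat.sub_add_cancel (by omega), List.take_length, ← h.2.1,
    SimpleGraph.Subgraph.induce_self_verts]

end IsPESk

theorem addEdge_le {G H : FGraph} {p q : ℕ} (h : G ≤ H) (hpq : H.Adj p q) : addEdge G p q ≤ H := by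
  refine ⟨Set.insert_subset (H.edge_vert hpq) (Set.insert_subset (H.edge_vert hpq.symm) h.1), ?_⟩
  rintro x y (h' | ⟨rfl, rfl, -⟩ | ⟨rfl, rfl, -⟩)
  exacts [h.2 h', hpq, hpq.symm]

namespace ThreeConnected

variable {G : FGraph} {v : ℕ}

theorem exists_adj_ne_ne (hG : ThreeConnected G) (hv : v ∈ G.verts) (p q : ℕ) :
    ∃ w, G.Adj v w ∧ w ≠ p ∧ w ≠ q := by
  classical
  obtain ⟨w, hw, hwvpq⟩ : ∃ w ∈ G.verts, w ∉ (({v, p, q} : Finset ℕ) : Set ℕ) :=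
    Set.exists_mem_notMem_of_ncard_lt_ncard (by
      rw [Set.ncard_coe_finset]
      exact Finset.card_le_three.trans_lt hG.1)
  simp only [Finset.coe_insert, Finset.coe_singleton, Set.mem_insert_iff,
    Set.mem_singleton_iff, not_or] at hwvpq
  set S := ({p, q} : Finset ℕ).erase v
  have hS : ∀ x, x ∈ (S : Set ℕ) ↔ (x = p ∨ x = q) ∧ x ≠ v := by simp [S]
  have hvS : v ∈ (G.deleteVerts S).verts := ⟨hv, fun h => ((hS v).1 h).2 rfl⟩
  have hwS : w ∈ (G.deleteVerts S).verts := ⟨hw, fun h => by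
    rcases ((hS w).1 h).1 with rfl | rfl <;> tauto⟩
  obtain ⟨r, hr⟩ := exists_adj_of_coe_connected
    (hG.2 S ((Finset.card_erase_le).trans Finset.card_le_two)) hvS hwS (Ne.symm hwvpq.1)
  rw [SimpleGraph.Subgraph.deleteVerts_adj] at hr
  obtain ⟨-, -, -, hrS, hvr⟩ := hr
  exact ⟨r, hvr, fun h => hrS ((hS r).2 ⟨.inl h, hvr.ne.symm⟩),
    fun h => hrS ((hS r).2 ⟨.inr h, hvr.ne.symm⟩)⟩

theorem adj_iff_of_forall_adj_imp (hG : ThreeConnected G) (hv : v ∈ G.verts) {a b c : ℕ}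
    (hN : ∀ w, G.Adj v w → w = a ∨ w = b ∨ w = c) (w : ℕ) :
    G.Adj v w ↔ w = a ∨ w = b ∨ w = c := by
  have key : ∀ x y z, (∀ w, G.Adj v w → w = x ∨ w = y ∨ w = z) → G.Adj v x := by
    intro x y z hN
    obtain ⟨w, hw, hwy, hwz⟩ := hG.exists_adj_ne_ne hv y z
    rcases hN w hw with rfl | rfl | rfl
    exacts [hw, absurd rfl hwy, absurd rfl hwz]
  refine ⟨hN w, ?_⟩
  rintro (rfl | rfl | rfl)
  exacts [key w b c hN, key w a c fun w hw => by have := hN w hw; tauto,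
    key w a b fun w hw => by have := hN w hw; tauto]

end ThreeConnected

def Touches (H : FGraph) (s t : Finset ℕ) : Prop := ∃ p ∈ s, ∃ q ∈ t, H.Adj p q

theorem Touches.symm {H : FGraph} {s t : Finset ℕ} (h : Touches H s t) : Touches H t s :=
  let ⟨p, hp, q, hq, hpq⟩ := h
  ⟨q, hq, p, hp, hpq.symm⟩

structure IsMinorModel (K H : FGraph) (β : ℕ → Finset ℕ) : Prop where
  nonempty : ∀ x ∈ K.verts, (β x).Nonempty
  subset : ∀ x ∈ K.verts, ↑(β x) ⊆ H.verts
  connected : ∀ x ∈ K.verts, (H.induce ↑(β x)).coe.Connected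
  disjoint : ∀ x ∈ K.verts, ∀ y ∈ K.verts, x ≠ y → Disjoint (β x) (β y)
  touches : ∀ x y, K.Adj x y → Touches H (β x) (β y)

theorem isMinor_iff {K H : FGraph} : IsMinor K H ↔ ∃ β, IsMinorModel K H β :=
  ⟨fun ⟨β, h₁, h₂, h₃⟩ =>
    ⟨β, ⟨fun x hx => (h₁ x hx).1, fun x hx => (h₁ x hx).2.1, fun x hx => (h₁ x hx).2.2, h₂, h₃⟩⟩,
  fun ⟨β, h⟩ => ⟨β, fun x hx => ⟨h.nonempty x hx, h.subset x hx, h.connected x hx⟩,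
    h.disjoint, h.touches⟩⟩

theorem IsMinorModel.eq_of_mem {K H : FGraph} {β : ℕ → Finset ℕ} (hβ : IsMinorModel K H β)
    {x y p : ℕ} (hx : x ∈ K.verts) (hy : y ∈ K.verts) (hpx : p ∈ β x) (hpy : p ∈ β y) :
    x = y :=
  by_contra fun hne => Finset.disjoint_left.1 (hβ.disjoint x hx y hy hne) hpx hpy

theorem K5g_adj_iff {x y : ℕ} : K5g.Adj x y ↔ x < 5 ∧ y < 5 ∧ x ≠ y := by
  show x ∈ ({0, 1, 2, 3, 4} : Finset ℕ) ∧ y ∈ ({0, 1, 2, 3, 4} : Finset ℕ) ∧ x ≠ y ↔ _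
  simp only [Finset.mem_insert, Finset.mem_singleton]
  omega

theorem mem_K5g_verts {x : ℕ} : x ∈ K5g.verts ↔ x < 5 := by
  show x ∈ ((({0, 1, 2, 3, 4} : Finset ℕ)) : Set ℕ) ↔ _
  simp only [Finset.coe_insert, Finset.coe_singleton, Set.mem_insert_iff, Set.mem_singleton_iff]
  omega

theorem exists_enumeration_K5g_of_triangle {xa xb xc : ℕ} (hab : K5g.Adj xa xb)
    (hbc : K5g.Adj xb xc) (hac : K5g.Adj xa xc) :
    ∃ f : ℕ → ℕ, (∀ m < 5, f m ∈ K5g.verts) ∧ (∀ m < 5, ∀ m' < 5, m ≠ m' → f m ≠ f m') ∧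
      (∀ m < 3, f m = xa ∨ f m = xb ∨ f m = xc) ∧
      ∀ m, 3 ≤ m → m < 5 → ¬(f m = xa ∨ f m = xb ∨ f m = xc) := by
  classical
  rw [K5g_adj_iff] at hab hbc hac
  have hX : ({xa, xb, xc} : Finset ℕ).card = 3 :=
    Finset.card_eq_three.2 ⟨xa, xb, xc, hab.2.2, hac.2.2, hbc.2.2, rfl⟩
  have hXsub : ({xa, xb, xc} : Finset ℕ) ⊆ Finset.range 5 := by
    simp only [Finset.insert_subset_iff, Finset.singleton_subset_iff, Finset.mem_range]
    omega
  obtain ⟨p, q, hpq, hY⟩ := Finset.card_eq_two.1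
    (show (Finset.range 5 \ {xa, xb, xc}).card = 2 by
      rw [Finset.card_sdiff_of_subset hXsub, hX, Finset.card_range])
  have hp : p ∈ Finset.range 5 \ {xa, xb, xc} := hY ▸ Finset.mem_insert_self p _
  have hq : q ∈ Finset.range 5 \ {xa, xb, xc} :=
    hY ▸ Finset.mem_insert_of_mem (Finset.mem_singleton_self q)
  simp only [Finset.mem_sdiff, Finset.mem_range, Finset.mem_insert, Finset.mem_singleton]
    at hp hq
  set L := [xa, xb, xc, p, q]
  have hL : L.Nodup := by
    simp only [L, List.nodup_cons, List.mem_cons, List.not_mem_nil, List.nodup_nil, or_false,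
      not_false_eq_true, and_true]
    omega
  refine ⟨fun m => L.getD m 0, fun m hm => ?_, fun m hm m' hm' hne => ?_, fun m hm => ?_,
    fun m hm hm' => ?_⟩
  · rw [mem_K5g_verts]
    interval_cases m <;> simp [L] <;> omega
  · have hlen : L.length = 5 := rfl
    show L.getD m 0 ≠ L.getD m' 0
    rw [List.getD_eq_getElem _ _ (hlen ▸ hm), List.getD_eq_getElem _ _ (hlen ▸ hm')]
    exact fun e => hne (hL.getElem_inj_iff.1 e)
  · interval_cases m <;> simp [L]
  · interval_cases m <;> simp [L] <;> omega

structure TriangleDefect (K G : FGraph) (u : ℕ) (β : ℕ → Finset ℕ) (xa xb xc : ℕ) : Prop where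
  adj : K.Adj xa xb ∧ K.Adj xb xc ∧ K.Adj xa xc
  nonempty : ∀ x ∈ K.verts, (β x).Nonempty
  subset : ∀ x ∈ K.verts, ↑(β x) ⊆ G.verts
  connected : ∀ x ∈ K.verts, (G.induce ↑(β x)).coe.Connected
  disjoint : ∀ x ∈ K.verts, ∀ y ∈ K.verts, x ≠ y → Disjoint (β x) (β y)
  notMem : ∀ x ∈ K.verts, u ∉ β x
  touches_corner : ∀ x, x = xa ∨ x = xb ∨ x = xc → ∃ w ∈ β x, G.Adj u w
  touches : ∀ y z, K.Adj y z → ¬((y = xa ∨ y = xb ∨ y = xc) ∧ (z = xa ∨ z = xb ∨ z = xc)) →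
    Touches G (β y) (β z)

namespace TriangleDefect

variable {G : FGraph} {u : ℕ} {β : ℕ → Finset ℕ} {xa xb xc : ℕ}

theorem false_of_K33 (hD : TriangleDefect K33g G u β xa xb xc) : False := by
  obtain ⟨hab, hbc, hac⟩ := hD.adj
  change (_ ∨ _) at hab hbc hac
  omega

/-- The corners of the triangle form one side of a `K₃,₃`; the two remaining vertices of `K₅`
and `u` form the other. -/
theorem isMinor_K33 (hD : TriangleDefect K5g G u β xa xb xc) : IsMinor K33g G := by
  obtain ⟨f, hfK, hfinj, hfX, hfY⟩ := exists_enumeration_K5g_of_triangle hD.adj.1 hD.adj.2.1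
    hD.adj.2.2
  have hu : u ∈ G.verts := by
    obtain ⟨w, -, huw⟩ := hD.touches_corner xa (.inl rfl)
    exact G.edge_vert huw
  set δ : ℕ → Finset ℕ := fun m => if m < 5 then β (f m) else {u}
  have hδ : ∀ m < 5, δ m = β (f m) := fun m hm => if_pos hm
  have hδ₅ : ∀ m, 5 ≤ m → δ m = {u} := fun m hm => if_neg (by omega)
  have hcross : ∀ m m', m < 3 → 3 ≤ m' → m' < 6 → Touches G (δ m) (δ m') := by
    intro m m' hm hm' hm'6
    rw [hδ m (by omega)]
    by_cases h5 : m' < 5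
    · rw [hδ m' h5]
      exact hD.touches _ _ (K5g_adj_iff.2 ⟨mem_K5g_verts.1 (hfK m (by omega)),
        mem_K5g_verts.1 (hfK m' h5), hfinj m (by omega) m' h5 (by omega)⟩)
        fun h => hfY m' hm' h5 h.2
    · obtain ⟨w, hw, huw⟩ := hD.touches_corner _ (hfX m hm)
      exact ⟨w, hw, u, hδ₅ m' (by omega) ▸ Finset.mem_singleton_self u, huw.symm⟩
  refine isMinor_iff.2 ⟨δ, ⟨fun m hm => ?_, fun m hm => ?_, fun m hm => ?_, ?_, ?_⟩⟩
  · by_cases h5 : m < 5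
    · exact hδ m h5 ▸ hD.nonempty _ (hfK m h5)
    · exact hδ₅ m (by omega) ▸ Finset.singleton_nonempty u
  · by_cases h5 : m < 5
    · exact hδ m h5 ▸ hD.subset _ (hfK m h5)
    · rw [hδ₅ m (by omega), Finset.coe_singleton]
      exact Set.singleton_subset_iff.2 hu
  · by_cases h5 : m < 5
    · exact hδ m h5 ▸ hD.connected _ (hfK m h5)
    · rw [hδ₅ m (by omega), Finset.coe_singleton]
      exact induce_singleton_connected G u
  · intro m hm m' hm' hne
    change m < 6 at hm
    change m' < 6 at hm'
    by_cases h5 : m < 5 <;> by_cases h5' : m' < 5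
    · rw [hδ m h5, hδ m' h5']
      exact hD.disjoint _ (hfK m h5) _ (hfK m' h5') (hfinj m h5 m' h5' hne)
    · rw [hδ m h5, hδ₅ m' (by omega)]
      exact Finset.disjoint_singleton_right.2 (hD.notMem _ (hfK m h5))
    · rw [hδ₅ m (by omega), hδ m' h5']
      exact Finset.disjoint_singleton_left.2 (hD.notMem _ (hfK m' h5'))
    · omega
  · rintro m m' (⟨hm, hm', hm'6⟩ | ⟨hm', hm, hm6⟩)
    exacts [hcross m m' hm hm' hm'6, (hcross m' m hm' hm hm6).symm]

end TriangleDefect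

theorem Finset.eq_or_eq_of_card_le_three {α : Type*} [DecidableEq α] {T : Finset α}
    (hT : T.card ≤ 3) {a b c d : α} (ha : a ∈ T) (hb : b ∈ T) (hc : c ∈ T) (hd : d ∈ T) :
    a = b ∨ a = c ∨ a = d ∨ b = c ∨ b = d ∨ c = d := by
  by_contra h
  simp only [not_or] at h
  obtain ⟨hab, hac, had, hbc, hbd, hcd⟩ := h
  have hsub : ({a, b, c, d} : Finset α) ⊆ T := by
    simp only [Finset.insert_subset_iff, Finset.singleton_subset_iff]
    exact ⟨ha, hb, hc, hd⟩
  have := Finset.card_le_card hsub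
  rw [Finset.card_insert_of_notMem (by simp [hab, hac, had]),
    Finset.card_insert_of_notMem (by simp [hbc, hbd]),
    Finset.card_insert_of_notMem (by simp [hcd]), Finset.card_singleton] at this
  omega

theorem IsMinorModel.eq_or_eq_of_inter_nonempty {K H : FGraph} {β : ℕ → Finset ℕ}
    (hβ : IsMinorModel K H β) {T : Finset ℕ} (hT : T.card ≤ 3) {a b c d : ℕ}
    (ha : a ∈ K.verts) (hb : b ∈ K.verts) (hc : c ∈ K.verts) (hd : d ∈ K.verts)
    (haT : (β a ∩ T).Nonempty) (hbT : (β b ∩ T).Nonempty) (hcT : (β c ∩ T).Nonempty)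
    (hdT : (β d ∩ T).Nonempty) : a = b ∨ a = c ∨ a = d ∨ b = c ∨ b = d ∨ c = d := by
  obtain ⟨ta, hta⟩ := haT
  obtain ⟨tb, htb⟩ := hbT
  obtain ⟨tc, htc⟩ := hcT
  obtain ⟨td, htd⟩ := hdT
  simp only [Finset.mem_inter] at hta htb htc htd
  have heq : ∀ {x y t s}, x ∈ K.verts → y ∈ K.verts → t ∈ β x → s ∈ β y → t = s → x = y :=
    fun hx hy ht hs e => hβ.eq_of_mem hx hy ht (e ▸ hs)
  rcases Finset.eq_or_eq_of_card_le_three hT hta.2 htb.2 htc.2 htd.2 with e | e | e | e | e | e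
  exacts [.inl (heq ha hb hta.1 htb.1 e), .inr (.inl (heq ha hc hta.1 htc.1 e)),
    .inr (.inr (.inl (heq ha hd hta.1 htd.1 e))),
    .inr (.inr (.inr (.inl (heq hb hc htb.1 htc.1 e)))),
    .inr (.inr (.inr (.inr (.inl (heq hb hd htb.1 htd.1 e))))),
    .inr (.inr (.inr (.inr (.inr (heq hc hd htc.1 htd.1 e)))))]

/-- `R` is the edge relation of a graph on the at most three points satisfying `P`. -/
theorem exists_triangle_of_forall_exists_avoiding {α : Type*} {P : α → Prop} {R : α → α → Prop}
    (hPR : ∀ y z, R y z → P y ∧ P z) (hsymm : ∀ y z, R y z → R z y) (hirrefl : ∀ y, ¬R y y)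
    (hthree : ∀ a b c d, P a → P b → P c → P d → a = b ∨ a = c ∨ a = d ∨ b = c ∨ b = d ∨ c = d)
    {x : α} (hx : P x) (havoid : ∀ x, P x → ∃ y z, R y z ∧ y ≠ x ∧ z ≠ x) :
    ∃ a b c, R a b ∧ R b c ∧ R a c ∧ ∀ y, P y → y = a ∨ y = b ∨ y = c := by
  obtain ⟨b, c, hbc, hbx, hcx⟩ := havoid x hx
  obtain ⟨hPb, hPc⟩ := hPR b c hbc
  have hcover : ∀ y, P y → y = x ∨ y = b ∨ y = c := fun y hy => by
    rcases hthree y x b c hy hx hPb hPc with h | h | h | h | h | h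
    exacts [Or.inl h, Or.inr (Or.inl h), Or.inr (Or.inr h), absurd h.symm hbx,
      absurd h.symm hcx, absurd (h ▸ hbc) (hirrefl c)]
  have hedge : ∀ w y z, R y z → (y = x ∨ y = w) → (z = x ∨ z = w) → R x w := by
    intro w y z h hy hz
    rcases hy with hy | hy <;> rcases hz with hz | hz <;> rw [hy, hz] at h
    exacts [absurd h (hirrefl x), h, hsymm _ _ h, absurd h (hirrefl w)]
  obtain ⟨y, z, hyz, hyb, hzb⟩ := havoid b hPb
  obtain ⟨y', z', hyz', hyc, hzc⟩ := havoid c hPc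
  have hxc : R x c := hedge c y z hyz
    (by rcases hcover y (hPR y z hyz).1 with h | h | h; exacts [.inl h, absurd h hyb, .inr h])
    (by rcases hcover z (hPR y z hyz).2 with h | h | h; exacts [.inl h, absurd h hzb, .inr h])
  have hxb : R x b := hedge b y' z' hyz'
    (by rcases hcover y' (hPR y' z' hyz').1 with h | h | h; exacts [.inl h, .inr h, absurd h hyc])
    (by rcases hcover z' (hPR y' z' hyz').2 with h | h | h; exacts [.inl h, .inr h, absurd h hzc])
  exact ⟨x, b, c, hxb, hbc, hxc, hcover⟩

structure NbhdAugmentation (G H : FGraph) (u : ℕ) (T : Finset ℕ) : Prop where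
  adj_iff : ∀ w, G.Adj u w ↔ w ∈ T
  verts_subset : H.verts ⊆ G.verts
  adj_or : ∀ p q, H.Adj p q → G.Adj p q ∨ p ∈ T ∧ q ∈ T

namespace NbhdAugmentation

open Finset

variable {G H K : FGraph} {u : ℕ} {T : Finset ℕ} {β : ℕ → Finset ℕ}

theorem refl (h : ∀ w, G.Adj u w ↔ w ∈ T) : NbhdAugmentation G G u T :=
  ⟨h, subset_rfl, fun _ _ h => Or.inl h⟩

theorem addEdge (hA : NbhdAugmentation G H u T) {a b : ℕ} (ha : a ∈ T) (hb : b ∈ T) :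
    NbhdAugmentation G (addEdge H a b) u T := by
  refine ⟨hA.adj_iff, Set.insert_subset (G.edge_vert ((hA.adj_iff a).2 ha).symm)
    (Set.insert_subset (G.edge_vert ((hA.adj_iff b).2 hb).symm) hA.verts_subset), ?_⟩
  rintro p q (h | ⟨rfl, rfl, -⟩ | ⟨rfl, rfl, -⟩)
  exacts [hA.adj_or p q h, Or.inr ⟨ha, hb⟩, Or.inr ⟨hb, ha⟩]

variable (hA : NbhdAugmentation G H u T)
include hA

theorem notMem : u ∉ T := fun h => ((hA.adj_iff u).2 h).ne rfl

theorem mem_of_adj {q : ℕ} (h : H.Adj u q) : q ∈ T :=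
  (hA.adj_or u q h).elim (hA.adj_iff q).1 fun h => absurd h.1 hA.notMem

theorem adj_of_notMem {p q : ℕ} (h : H.Adj p q) (hq : q ∉ T) : G.Adj p q :=
  (hA.adj_or p q h).resolve_right fun h => hq h.2

theorem adj_of_card_le_one {S : Finset ℕ} (hS : (S ∩ T).card ≤ 1) {p q : ℕ} (hp : p ∈ S)
    (hq : q ∈ S) (h : H.Adj p q) : G.Adj p q :=
  (hA.adj_or p q h).resolve_right fun ⟨hpT, hqT⟩ =>
    h.ne (card_le_one.1 hS p (mem_inter.2 ⟨hp, hpT⟩) q (mem_inter.2 ⟨hq, hqT⟩))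

theorem connected_of_card_le_one {S : Finset ℕ} (hS : (H.induce ↑S).coe.Connected)
    (hST : (S ∩ T).card ≤ 1) : (G.induce ↑S).coe.Connected :=
  induce_connected_mono hS fun _ hp _ hq h => hA.adj_of_card_le_one hST hp hq h

theorem connected_insert {S : Finset ℕ} (hS : (H.induce ↑S).coe.Connected)
    (hST : (S ∩ T).Nonempty) : (G.induce ↑(insert u S)).coe.Connected := by
  obtain ⟨t, ht⟩ := hST
  rw [mem_inter] at ht
  rw [coe_insert]
  refine induce_insert_connected hS ht.1 ((hA.adj_iff t).2 ht.2) fun p _ q _ h => ?_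
  exact (hA.adj_or p q h).imp_right fun ⟨hp, hq⟩ =>
    ⟨((hA.adj_iff p).2 hp).symm, (hA.adj_iff q).2 hq⟩

/-- `u` is a leaf of `S`: its neighbours lie in `T`, which meets `S` at most once. -/
theorem connected_erase {S : Finset ℕ} (hS : (H.induce ↑S).coe.Connected)
    (hST : (S ∩ T).card ≤ 1) (hanchor : u ∈ S → (S ∩ T).Nonempty) :
    (S.erase u).Nonempty ∧ (G.induce ↑(S.erase u)).coe.Connected := by
  by_cases hu : u ∈ S
  · obtain ⟨t, ht⟩ := hanchor hu
    have htu : t ≠ u := fun e => hA.notMem (e ▸ (mem_inter.1 ht).2)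
    have hleaf : ∀ r ∈ (S : Set ℕ), H.Adj u r → r = t := fun r hr h =>
      card_le_one.1 hST r (mem_inter.2 ⟨hr, hA.mem_of_adj h⟩) t ht
    have hconn := induce_diff_singleton_connected hS (mem_inter.1 ht).1 htu hleaf
    rw [← coe_erase] at hconn
    exact ⟨⟨t, mem_erase.2 ⟨htu, (mem_inter.1 ht).1⟩⟩, hA.connected_of_card_le_one hconn
      ((card_le_card (inter_subset_inter_right (erase_subset u S))).trans hST)⟩
  · rw [erase_eq_of_notMem hu]
    obtain ⟨⟨x, hx⟩⟩ := hS.nonempty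
    exact ⟨⟨x, hx⟩, hA.connected_of_card_le_one hS hST⟩

theorem eq_singleton (hβ : IsMinorModel K H β) {x : ℕ} (hx : x ∈ K.verts) (hu : u ∈ β x)
    (hxT : ¬(β x ∩ T).Nonempty) : β x = {u} :=
  eq_singleton_of_induce_connected (hβ.connected x hx) hu fun r hr h =>
    hxT ⟨r, mem_inter.2 ⟨hr, hA.mem_of_adj h⟩⟩

theorem isMinorModel_of_card_le_one (hβ : IsMinorModel K H β)
    (hsparse : ∀ x ∈ K.verts, (β x ∩ T).card ≤ 1)
    (hK : ∀ y z, K.Adj y z → (β y ∩ T).Nonempty → (β z ∩ T).Nonempty → False) :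
    IsMinorModel K G β where
  nonempty := hβ.nonempty
  subset x hx := (hβ.subset x hx).trans hA.verts_subset
  connected x hx := hA.connected_of_card_le_one (hβ.connected x hx) (hsparse x hx)
  disjoint := hβ.disjoint
  touches y z hyz := by
    obtain ⟨p, hp, q, hq, h⟩ := hβ.touches y z hyz
    exact ⟨p, hp, q, hq, (hA.adj_or p q h).resolve_right fun ⟨hpT, hqT⟩ =>
      hK y z hyz ⟨p, mem_inter.2 ⟨hp, hpT⟩⟩ ⟨q, mem_inter.2 ⟨hq, hqT⟩⟩⟩

theorem touches_insert_erase (hβ : IsMinorModel K H β)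
    (hanchor : ∀ x ∈ K.verts, u ∈ β x → (β x ∩ T).Nonempty) {x₀ z : ℕ} (hK : K.Adj x₀ z) :
    Touches G (insert u (β x₀)) ((β z).erase u) := by
  obtain ⟨p, hp, q, hq, h⟩ := hβ.touches x₀ z hK
  by_cases hqu : q = u
  · obtain ⟨t, ht⟩ := hanchor z (K.edge_vert hK.symm) (hqu ▸ hq)
    rw [mem_inter] at ht
    exact ⟨u, mem_insert_self u _, t,
      mem_erase.2 ⟨fun e => hA.notMem (e ▸ ht.2), ht.1⟩, (hA.adj_iff t).2 ht.2⟩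
  by_cases hqT : q ∈ T
  · exact ⟨u, mem_insert_self u _, q, mem_erase.2 ⟨hqu, hq⟩, (hA.adj_iff q).2 hqT⟩
  · exact ⟨p, mem_insert_of_mem hp, q, mem_erase.2 ⟨hqu, hq⟩, hA.adj_of_notMem h hqT⟩

/-- Moving `u` into the branch set of `x₀` turns the `H`-model `β` into a `G`-model. -/
theorem isMinor_of_absorb (hβ : IsMinorModel K H β)
    (hanchor : ∀ x ∈ K.verts, u ∈ β x → (β x ∩ T).Nonempty) {x₀ : ℕ} (hx₀ : x₀ ∈ K.verts)
    (hx₀T : (β x₀ ∩ T).Nonempty) (hsparse : ∀ x ∈ K.verts, x ≠ x₀ → (β x ∩ T).card ≤ 1)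
    (hgood : ∀ y z, K.Adj y z → y ≠ x₀ → z ≠ x₀ → Touches G ((β y).erase u) ((β z).erase u)) :
    IsMinor K G := by
  classical
  set γ := Function.update (fun x => (β x).erase u) x₀ (insert u (β x₀))
  have hγ₀ : γ x₀ = insert u (β x₀) := Function.update_self ..
  have hγ : ∀ x ≠ x₀, γ x = (β x).erase u := fun x hx => Function.update_of_ne hx ..
  have herase : ∀ x ∈ K.verts, x ≠ x₀ → (γ x).Nonempty ∧ (G.induce ↑(γ x)).coe.Connected :=
    fun x hx hne => hγ x hne ▸
      hA.connected_erase (hβ.connected x hx) (hsparse x hx hne) (hanchor x hx)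
  have hdisj : ∀ y ∈ K.verts, y ≠ x₀ → Disjoint (γ x₀) (γ y) := fun y hy hne => by
    rw [hγ₀, hγ y hne, disjoint_insert_left]
    exact ⟨notMem_erase u _, (hβ.disjoint x₀ hx₀ y hy hne.symm).mono_right (erase_subset u _)⟩
  refine isMinor_iff.2 ⟨γ, ⟨fun x hx => ?_, fun x hx => ?_, fun x hx => ?_, ?_, ?_⟩⟩
  · obtain rfl | hne := eq_or_ne x x₀
    · exact hγ₀ ▸ insert_nonempty u _
    · exact (herase x hx hne).1
  · obtain rfl | hne := eq_or_ne x x₀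
    · obtain ⟨t, ht⟩ := hx₀T
      rw [hγ₀, coe_insert]
      exact Set.insert_subset (G.edge_vert ((hA.adj_iff t).2 (mem_inter.1 ht).2))
        ((hβ.subset x hx).trans hA.verts_subset)
    · rw [hγ x hne, coe_erase]
      exact Set.sdiff_subset.trans ((hβ.subset x hx).trans hA.verts_subset)
  · obtain rfl | hne := eq_or_ne x x₀
    · exact hγ₀ ▸ hA.connected_insert (hβ.connected x hx) hx₀T
    · exact (herase x hx hne).2
  · intro x hx y hy hxy
    obtain rfl | hx0 := eq_or_ne x x₀
    · exact hdisj y hy hxy.symm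
    obtain rfl | hy0 := eq_or_ne y x₀
    · exact (hdisj x hx hx0).symm
    rw [hγ x hx0, hγ y hy0]
    exact (hβ.disjoint x hx y hy hxy).mono (erase_subset u _) (erase_subset u _)
  · intro y z hyz
    obtain rfl | hy0 := eq_or_ne y x₀
    · rw [hγ₀, hγ z hyz.ne.symm]
      exact hA.touches_insert_erase hβ hanchor hyz
    obtain rfl | hz0 := eq_or_ne z x₀
    · rw [hγ₀, hγ y hy0]
      exact (hA.touches_insert_erase hβ hanchor hyz.symm).symm
    rw [hγ y hy0, hγ z hz0]
    exact hgood y z hyz hy0 hz0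

theorem inter_nonempty_of_not_touches (hβ : IsMinorModel K H β)
    (hanchor : ∀ x ∈ K.verts, u ∈ β x → (β x ∩ T).Nonempty) {y z : ℕ} (hyz : K.Adj y z)
    (hbad : ¬Touches G ((β y).erase u) ((β z).erase u)) :
    (β y ∩ T).Nonempty ∧ (β z ∩ T).Nonempty := by
  have hy := K.edge_vert hyz
  have hz := K.edge_vert hyz.symm
  obtain ⟨p, hp, q, hq, h⟩ := hβ.touches y z hyz
  by_cases hpu : p = u
  · subst hpu
    exact ⟨hanchor y hy hp, q, mem_inter.2 ⟨hq, hA.mem_of_adj h⟩⟩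
  by_cases hqu : q = u
  · subst hqu
    exact ⟨⟨p, mem_inter.2 ⟨hp, hA.mem_of_adj h.symm⟩⟩, hanchor z hz hq⟩
  rcases hA.adj_or p q h with hG | ⟨hpT, hqT⟩
  · exact (hbad ⟨p, mem_erase.2 ⟨hpu, hp⟩, q, mem_erase.2 ⟨hqu, hq⟩, hG⟩).elim
  · exact ⟨⟨p, mem_inter.2 ⟨hp, hpT⟩⟩, q, mem_inter.2 ⟨hq, hqT⟩⟩

/-- `u` is absorbed into `β x₀`, outside which at most one vertex of `T` remains. -/
theorem isMinor_of_one_lt_card (hT : T.card ≤ 3) (hβ : IsMinorModel K H β)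
    (hanchor : ∀ x ∈ K.verts, u ∈ β x → (β x ∩ T).Nonempty) {x₀ : ℕ} (hx₀ : x₀ ∈ K.verts)
    (h2 : 1 < (β x₀ ∩ T).card) : IsMinor K G := by
  have hout : (T \ β x₀).card ≤ 1 := by
    have := card_sdiff_add_card_inter T (β x₀)
    rw [inter_comm] at this
    omega
  have hsub : ∀ x ∈ K.verts, x ≠ x₀ → β x ∩ T ⊆ T \ β x₀ := fun x hx hne t ht =>
    mem_sdiff.2 ⟨(mem_inter.1 ht).2,
      fun h => disjoint_left.1 (hβ.disjoint x hx x₀ hx₀ hne) (mem_inter.1 ht).1 h⟩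
  refine hA.isMinor_of_absorb hβ hanchor hx₀ (card_pos.1 (by omega))
    (fun x hx hne => (card_le_card (hsub x hx hne)).trans hout)
    fun y z hyz hy₀ hz₀ => by_contra fun hbad => ?_
  have hy := K.edge_vert hyz
  have hz := K.edge_vert hyz.symm
  obtain ⟨⟨s, hs⟩, ⟨t, ht⟩⟩ := hA.inter_nonempty_of_not_touches hβ hanchor hyz hbad
  have hst := card_le_one.1 hout s (hsub y hy hy₀ hs) t (hsub z hz hz₀ ht)
  exact hyz.ne (hβ.eq_of_mem hy hz (mem_inter.1 hs).1 (hst ▸ (mem_inter.1 ht).1))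

theorem triangleDefect_erase (hβ : IsMinorModel K H β)
    (hanchor : ∀ x ∈ K.verts, u ∈ β x → (β x ∩ T).Nonempty)
    (hsparse : ∀ x ∈ K.verts, (β x ∩ T).card ≤ 1) {xa xb xc : ℕ}
    (hadj : K.Adj xa xb ∧ K.Adj xb xc ∧ K.Adj xa xc)
    (hcorner : ∀ x, x = xa ∨ x = xb ∨ x = xc → (β x ∩ T).Nonempty)
    (hgood : ∀ y z, K.Adj y z → ¬((y = xa ∨ y = xb ∨ y = xc) ∧ (z = xa ∨ z = xb ∨ z = xc)) →
      Touches G ((β y).erase u) ((β z).erase u)) :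
    TriangleDefect K G u (fun x => (β x).erase u) xa xb xc where
  adj := hadj
  nonempty x hx := (hA.connected_erase (hβ.connected x hx) (hsparse x hx) (hanchor x hx)).1
  subset x hx :=
    (coe_subset.2 (erase_subset u _)).trans ((hβ.subset x hx).trans hA.verts_subset)
  connected x hx := (hA.connected_erase (hβ.connected x hx) (hsparse x hx) (hanchor x hx)).2
  disjoint x hx y hy hxy :=
    (hβ.disjoint x hx y hy hxy).mono (erase_subset u _) (erase_subset u _)
  notMem _ _ := notMem_erase u _
  touches_corner x hx := by
    obtain ⟨t, ht⟩ := hcorner x hx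
    rw [mem_inter] at ht
    exact ⟨t, mem_erase.2 ⟨fun e => hA.notMem (e ▸ ht.2), ht.1⟩, (hA.adj_iff t).2 ht.2⟩
  touches := hgood

/-- The edges of `K` that `G` misses once `u` is removed join branch sets meeting `T`; unless one
branch set is incident to all of them, they form a triangle. -/
theorem isMinor_or_triangleDefect (hT : T.card ≤ 3) (hβ : IsMinorModel K H β)
    (hanchor : ∀ x ∈ K.verts, u ∈ β x → (β x ∩ T).Nonempty)
    (hsparse : ∀ x ∈ K.verts, (β x ∩ T).card ≤ 1) :
    IsMinor K G ∨ ∃ γ xa xb xc, TriangleDefect K G u γ xa xb xc := by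
  set P : ℕ → Prop := fun x => x ∈ K.verts ∧ (β x ∩ T).Nonempty
  set R : ℕ → ℕ → Prop := fun y z => K.Adj y z ∧ ¬Touches G ((β y).erase u) ((β z).erase u)
  have hPR : ∀ y z, R y z → P y ∧ P z := fun y z ⟨hyz, hbad⟩ =>
    have h := hA.inter_nonempty_of_not_touches hβ hanchor hyz hbad
    ⟨⟨K.edge_vert hyz, h.1⟩, K.edge_vert hyz.symm, h.2⟩
  by_cases hnone : ∃ x, P x
  swap
  · exact .inl (isMinor_iff.2 ⟨β, hA.isMinorModel_of_card_le_one hβ hsparse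
      fun y _ hyz hy _ => hnone ⟨y, K.edge_vert hyz, hy⟩⟩)
  by_cases habsorb : ∃ x₀, P x₀ ∧ ∀ y z, K.Adj y z → y ≠ x₀ → z ≠ x₀ →
      Touches G ((β y).erase u) ((β z).erase u)
  · obtain ⟨x₀, ⟨hx₀, hx₀T⟩, hgood⟩ := habsorb
    exact .inl (hA.isMinor_of_absorb hβ hanchor hx₀ hx₀T (fun x hx _ => hsparse x hx) hgood)
  simp only [not_exists, not_and, not_forall] at habsorb
  obtain ⟨x₁, hx₁⟩ := hnone
  obtain ⟨xa, xb, xc, hab, hbc, hac, hcover⟩ := exists_triangle_of_forall_exists_avoiding hPR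
    (fun y z ⟨hyz, hbad⟩ => ⟨hyz.symm, fun h => hbad h.symm⟩) (fun y h => h.1.ne rfl)
    (fun a b c d ha hb hc hd => hβ.eq_or_eq_of_inter_nonempty hT ha.1 hb.1 hc.1 hd.1
      ha.2 hb.2 hc.2 hd.2) hx₁
    (fun x₀ hx₀ =>
      let ⟨y, z, hyz, hy, hz, hbad⟩ := habsorb x₀ hx₀
      ⟨y, z, ⟨hyz, hbad⟩, hy, hz⟩)
  refine .inr ⟨_, xa, xb, xc, hA.triangleDefect_erase hβ hanchor hsparse ⟨hab.1, hbc.1, hac.1⟩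
    (fun x hx => ?_) fun y z hyz hnot => by_contra fun hbad => ?_⟩
  · rcases hx with rfl | rfl | rfl
    exacts [(hPR _ _ hab).1.2, (hPR _ _ hab).2.2, (hPR _ _ hbc).2.2]
  · obtain ⟨hy, hz⟩ := hPR y z ⟨hyz, hbad⟩
    exact hnot ⟨hcover y hy, hcover z hz⟩

theorem isMinor_or_singleton_or_triangleDefect (hT : T.card ≤ 3) (hβ : IsMinorModel K H β) :
    IsMinor K G ∨ (∃ z₀ ∈ K.verts, β z₀ = {u}) ∨ ∃ γ xa xb xc, TriangleDefect K G u γ xa xb xc := by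
  by_cases hsingle : ∃ z₀ ∈ K.verts, u ∈ β z₀ ∧ ¬(β z₀ ∩ T).Nonempty
  · obtain ⟨z₀, hz₀, hu, hz₀T⟩ := hsingle
    exact .inr (.inl ⟨z₀, hz₀, hA.eq_singleton hβ hz₀ hu hz₀T⟩)
  have hanchor : ∀ x ∈ K.verts, u ∈ β x → (β x ∩ T).Nonempty := fun x hx hu =>
    by_contra fun h => hsingle ⟨x, hx, hu, h⟩
  by_cases htwo : ∃ x₀ ∈ K.verts, 1 < (β x₀ ∩ T).card
  · obtain ⟨x₀, hx₀, h2⟩ := htwo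
    exact .inl (hA.isMinor_of_one_lt_card hT hβ hanchor hx₀ h2)
  simp only [not_exists, not_and, not_lt] at htwo
  exact (hA.isMinor_or_triangleDefect hT hβ hanchor htwo).imp_right .inr

theorem inter_nonempty_of_adj (hβ : IsMinorModel K H β) {z₀ y : ℕ} (hz₀ : β z₀ = {u})
    (hK : K.Adj z₀ y) : (β y ∩ T).Nonempty := by
  obtain ⟨p, hp, q, hq, h⟩ := hβ.touches z₀ y hK
  rw [hz₀, mem_singleton] at hp
  subst hp
  exact ⟨q, mem_inter.2 ⟨hq, hA.mem_of_adj h⟩⟩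

theorem exists_injOn_of_singleton (hβ : IsMinorModel K H β) {z₀ : ℕ} (hz₀ : β z₀ = {u})
    {Y : Finset ℕ} (hY : ∀ y ∈ Y, K.Adj z₀ y) :
    ∃ t : ℕ → ℕ, (∀ y ∈ Y, t y ∈ β y ∩ T) ∧ Set.InjOn t Y := by
  have : ∀ y, ∃ t, y ∈ Y → t ∈ β y ∩ T := fun y =>
    if hy : y ∈ Y then (hA.inter_nonempty_of_adj hβ hz₀ (hY y hy)).imp fun _ h _ => h
    else ⟨0, fun h => absurd h hy⟩
  choose t ht using this
  refine ⟨t, ht, fun y hy y' hy' e => ?_⟩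
  exact hβ.eq_of_mem (K.edge_vert (hY y hy).symm) (K.edge_vert (hY y' hy').symm)
    (mem_inter.1 (ht y hy)).1 (e ▸ (mem_inter.1 (ht y' hy')).1)

theorem card_le_of_singleton (hβ : IsMinorModel K H β) {z₀ : ℕ} (hz₀ : β z₀ = {u})
    {Y : Finset ℕ} (hY : ∀ y ∈ Y, K.Adj z₀ y) : Y.card ≤ T.card :=
  let ⟨t, ht, hinj⟩ := hA.exists_injOn_of_singleton hβ hz₀ hY
  card_le_card_of_injOn t (fun y hy => (mem_inter.1 (ht y hy)).2) hinj

theorem card_le_one_of_singleton (hβ : IsMinorModel K H β) {z₀ : ℕ} (hz₀ : β z₀ = {u})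
    {Y : Finset ℕ} (hY : ∀ y ∈ Y, K.Adj z₀ y) (hTY : T.card ≤ Y.card) :
    (∀ x ∈ K.verts, (β x ∩ T).card ≤ 1) ∧ ∀ x ∈ K.verts, (β x ∩ T).Nonempty → x ∈ Y := by
  obtain ⟨t, ht, hinj⟩ := hA.exists_injOn_of_singleton hβ hz₀ hY
  have hYK : ∀ y ∈ Y, y ∈ K.verts := fun y hy => K.edge_vert (hY y hy).symm
  have hsurj := surj_on_of_inj_on_of_card_le (fun y _ => t y)
    (fun y hy => (mem_inter.1 (ht y hy)).2) (fun y y' hy hy' e => hinj hy hy' e) hTY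
  have hkey : ∀ x ∈ K.verts, ∀ s ∈ β x ∩ T, ∃ y ∈ Y, x = y ∧ s = t y := fun x hx s hs => by
    obtain ⟨y, hy, rfl⟩ := hsurj s (mem_inter.1 hs).2
    exact ⟨y, hy, hβ.eq_of_mem hx (hYK y hy) (mem_inter.1 hs).1 (mem_inter.1 (ht y hy)).1, rfl⟩
  refine ⟨fun x hx => card_le_one.2 fun s hs s' hs' => ?_, fun x hx ⟨s, hs⟩ => ?_⟩
  · obtain ⟨y, -, rfl, rfl⟩ := hkey x hx s hs
    obtain ⟨y', -, e, rfl⟩ := hkey x hx s' hs'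
    rw [← e]
  · obtain ⟨y, hy, rfl, -⟩ := hkey x hx s hs
    exact hy

theorem false_of_singleton_K5 (hT : T.card ≤ 3) (hβ : IsMinorModel K5g H β) {z₀ : ℕ}
    (hz₀ : z₀ ∈ K5g.verts) (hz : β z₀ = {u}) : False := by
  rw [mem_K5g_verts] at hz₀
  have := hA.card_le_of_singleton hβ hz (Y := (range 5).erase z₀) fun y hy => by
    rw [mem_erase, mem_range] at hy
    exact K5g_adj_iff.2 ⟨hz₀, hy.2, hy.1.symm⟩
  rw [card_erase_of_mem (mem_range.2 hz₀), card_range] at this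
  omega

theorem isMinor_K33_of_singleton (hT : T.card ≤ 3) (hβ : IsMinorModel K33g H β) {z₀ : ℕ}
    (hz₀ : z₀ ∈ K33g.verts) (hz : β z₀ = {u}) : IsMinor K33g G := by
  change z₀ < 6 at hz₀
  set Y : Finset ℕ := if z₀ < 3 then {3, 4, 5} else {0, 1, 2}
  have hmemY : ∀ y ∈ Y, (z₀ < 3 ∧ 3 ≤ y ∧ y < 6) ∨ (3 ≤ z₀ ∧ y < 3) := by
    intro y hy
    simp only [Y] at hy
    split_ifs at hy <;> simp only [mem_insert, mem_singleton] at hy <;> omega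
  have hYc : Y.card = 3 := by
    simp only [Y]
    split_ifs <;> rfl
  obtain ⟨hsparse, hY⟩ := hA.card_le_one_of_singleton hβ hz
    (fun y hy => show _ ∨ _ by have := hmemY y hy; omega) (hT.trans hYc.ge)
  refine isMinor_iff.2 ⟨β, hA.isMinorModel_of_card_le_one hβ hsparse fun y z hyz hyT hzT => ?_⟩
  have hy := hmemY y (hY y (K33g.edge_vert hyz) hyT)
  have hz := hmemY z (hY z (K33g.edge_vert hyz.symm) hzT)
  change _ ∨ _ at hyz
  omega

theorem planar (hT : T.card ≤ 3) (hG : Planar G) : Planar H := by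
  refine ⟨fun h5 => ?_, fun h33 => ?_⟩
  · obtain ⟨β, hβ⟩ := isMinor_iff.1 h5
    rcases hA.isMinor_or_singleton_or_triangleDefect hT hβ with h | ⟨z₀, hz₀, hz⟩ | ⟨_, _, _, _, hD⟩
    exacts [hG.1 h, hA.false_of_singleton_K5 hT hβ hz₀ hz, hG.2 hD.isMinor_K33]
  · obtain ⟨β, hβ⟩ := isMinor_iff.1 h33
    rcases hA.isMinor_or_singleton_or_triangleDefect hT hβ with h | ⟨z₀, hz₀, hz⟩ | ⟨_, _, _, _, hD⟩
    exacts [hG.2 h, hG.2 (hA.isMinor_K33_of_singleton hT hβ hz₀ hz), hD.false_of_K33]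

end NbhdAugmentation

theorem three_connected_case_general (G G' : FGraph) (hG3 : ThreeConnected G) (hGp : Planar G)
    (hG' : IsKTree 3 G') (hsub : G ≤ G')
    (hmin : ∀ H : FGraph, IsKTree 3 H → G ≤ H → G'.verts.ncard ≤ H.verts.ncard)
    (l : List ℕ) (hl : IsPESk 3 l G') (u a b c : ℕ) (hu : l.getLast? = some u)
    (hab : a ≠ b) (hac : a ≠ c) (hbc : b ≠ c)
    (hnbr : G'.neighborSet u = {a, b, c}) :
    u ∈ G.verts ∧ a ∈ G.verts ∧ b ∈ G.verts ∧ c ∈ G.verts ∧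
      Planar (addEdge (addEdge (addEdge G a b) b c) a c) ∧
      IsPartialKTree 3 (addEdge (addEdge (addEdge G a b) b c) a c) := by
  have hlen : 3 < l.length := by
    have := Set.ncard_le_ncard hsub.1 hG'.finite_verts
    rw [hl.ncard_verts] at this
    linarith [hG3.1]
  obtain ⟨H₀, s, hH₀, hs, huH₀, rfl⟩ := hl.exists_isKTree_eq_addVertex hlen hu
  have huG : u ∈ G.verts := mem_verts_of_le_addVertex_of_minimal hH₀ huH₀ hsub hmin
  have hnbr' : ∀ w, (addVertex H₀ u s).Adj u w ↔ w ∈ ({a, b, c} : Finset ℕ) := fun w => by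
    rw [← SimpleGraph.Subgraph.mem_neighborSet, hnbr]
    simp
  have hT : ∀ w, G.Adj u w ↔ w ∈ ({a, b, c} : Finset ℕ) := by
    simpa using hG3.adj_iff_of_forall_adj_imp huG fun w hw => by simpa using (hnbr' w).1 (hsub.2 hw)
  have hclique : ∀ x y, x ∈ ({a, b, c} : Finset ℕ) → y ∈ ({a, b, c} : Finset ℕ) → x ≠ y →
      (addVertex H₀ u s).Adj x y := fun x y hx hy =>
    (hs.isSimplicial_addVertex huH₀).2 x y ((hnbr' x).2 hx) ((hnbr' y).2 hy)
  have hA : NbhdAugmentation G (addEdge (addEdge (addEdge G a b) b c) a c) u {a, b, c} :=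
    (((NbhdAugmentation.refl hT).addEdge (by simp) (by simp)).addEdge (by simp) (by simp)).addEdge
      (by simp) (by simp)
  refine ⟨huG, G.edge_vert ((hT a).2 (by simp)).symm, G.edge_vert ((hT b).2 (by simp)).symm,
    G.edge_vert ((hT c).2 (by simp)).symm, hA.planar Finset.card_le_three hGp, _, hG', ?_⟩
  exact addEdge_le (addEdge_le (addEdge_le hsub (hclique a b (by simp) (by simp) hab))
    (hclique b c (by simp) (by simp) hbc)) (hclique a c (by simp) (by simp) hac)

theorem three_connected_case (G G' : FGraph) (hG3 : ThreeConnected G) (hGp : Planar G)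
    (hGpt : IsPartialKTree 3 G) (hG' : IsKTree 3 G') (hsub : G ≤ G')
    (hmin : ∀ H : FGraph, IsKTree 3 H → G ≤ H → G'.verts.ncard ≤ H.verts.ncard)
    (l : List ℕ) (hl : IsPESk 3 l G') (u a b c : ℕ) (hu : l.getLast? = some u)
    (hab : a ≠ b) (hac : a ≠ c) (hbc : b ≠ c)
    (hnbr : G'.neighborSet u = {a, b, c}) :
    u ∈ G.verts ∧ a ∈ G.verts ∧ b ∈ G.verts ∧ c ∈ G.verts ∧
      Planar (addEdge (addEdge (addEdge G a b) b c) a c) ∧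
      IsPartialKTree 3 (addEdge (addEdge (addEdge G a b) b c) a c) :=
  three_connected_case_general G G' hG3 hGp hG' hsub hmin l hl u a b c hu hab hac hbc hnbr
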